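/- Let n be a positive integer and let U : ℕ → ℚ satisfy ∑_{k ∣ m} k·U(n/k) = (−1)^{m−1} for every positive divisor m of n. Then ∑_{d ∣ n} U(d) equals 1 if n is odd and equals 0 if n is even. Moreover U(n) = 1, U(n/2) = −1 when n is even, and U(d) = 0 for every other positive divisor d of n. -/

import Mathlib

open Finset

/-! Substituting `V k := U (n / k)` turns the system into `∑_{k ∣ m} k V(k) = (-1)^(m-1)` for
`m ∣ n`, which is triangular with respect to divisibility and has nonzero diagonal entries `m`,
so it has at most one solution. The solution is `V = δ₁ - δ₂`, because for it the left-hand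
side is `1 - 2·[2 ∣ m] = (-1)^(m-1)`. The claimed values of `U` are read off from `V`. -/

def indicatorOneSubTwo (R : Type*) [Ring R] (k : ℕ) : R :=
  (if k = 1 then 1 else 0) - (if k = 2 then 1 else 0)

theorem eq_zero_of_sum_divisors_mul_eq_zero {R : Type*} [Ring R] [NoZeroDivisors R] [CharZero R]
    {n : ℕ} {h : ℕ → R} (hh : ∀ m, m ∣ n → 0 < m → ∑ k ∈ m.divisors, (k : R) * h k = 0) :
    ∀ m, m ∣ n → 0 < m → h m = 0 := by
  intro m
  induction m using Nat.strong_induction_on with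
  | _ m ih =>
    intro hmn hm
    have hsum := hh m hmn hm
    rw [← Nat.cons_self_properDivisors hm.ne', sum_cons] at hsum
    have hproper : ∑ k ∈ m.properDivisors, (k : R) * h k = 0 := by
      refine sum_eq_zero fun k hk => ?_
      obtain ⟨hkm, hklt⟩ := Nat.mem_properDivisors.mp hk
      rw [ih k hklt (hkm.trans hmn) (Nat.pos_of_dvd_of_pos hkm hm), mul_zero]
    rw [hproper, add_zero] at hsum
    exact (mul_eq_zero.mp hsum).resolve_left (Nat.cast_ne_zero.mpr hm.ne')

theorem sum_divisors_mul_indicatorOneSubTwo {R : Type*} [Ring R] (w : ℕ → R) {m : ℕ}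
    (hm : m ≠ 0) :
    ∑ k ∈ m.divisors, w k * indicatorOneSubTwo R k = w 1 - if 2 ∣ m then w 2 else 0 := by
  simp [indicatorOneSubTwo, mul_sub, sum_sub_distrib, hm]

theorem neg_one_pow_pred_eq_one_sub {R : Type*} [Ring R] {m : ℕ} (hm : m ≠ 0) :
    (-1 : R) ^ (m - 1) = 1 - if 2 ∣ m then 2 else 0 := by
  rcases Nat.even_or_odd m with he | ho
  · rw [if_pos he.two_dvd, (Nat.Even.sub_odd (Nat.pos_of_ne_zero hm) he odd_one).neg_one_pow]
    norm_num
  · rw [if_neg (Nat.not_even_iff_odd.mpr ho ∘ even_iff_two_dvd.mpr),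
      (Nat.Odd.sub_odd ho odd_one).neg_one_pow, sub_zero]

/-- any solution of the system ∑_{k ∣ m} k·U(n/k) = (−1)^{m−1}
(for all positive divisors m of n) satisfies U(n) = 1, U(n/2) = −1 when n is even,
U(d) = 0 for every other positive divisor d of n, and ∑_{d ∣ n} U(d) is 1 for odd n
and 0 for even n. -/
theorem stratum_system_solution_values
    (n : ℕ) (hn : 0 < n) (U : ℕ → ℚ)
    (hU : ∀ m : ℕ, m ∣ n → 0 < m →
      ∑ k ∈ m.divisors, (k : ℚ) * U (n / k) = (-1) ^ (m - 1)) :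
    (∑ d ∈ n.divisors, U d = if Odd n then 1 else 0) ∧
    U n = 1 ∧
    (Even n → U (n / 2) = -1) ∧
    (∀ d : ℕ, d ∣ n → 0 < d → d ≠ n → n ≠ 2 * d → U d = 0) := by
  have hV : ∀ k, k ∣ n → 0 < k → U (n / k) = indicatorOneSubTwo ℚ k := by
    refine fun k hk hk0 => sub_eq_zero.mp
      (eq_zero_of_sum_divisors_mul_eq_zero (h := fun k => U (n / k) - indicatorOneSubTwo ℚ k)
        (fun m hm hm0 => ?_) k hk hk0)
    simp only [mul_sub, sum_sub_distrib, hU m hm hm0,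
      sum_divisors_mul_indicatorOneSubTwo _ hm0.ne', neg_one_pow_pred_eq_one_sub hm0.ne']
    norm_num
  refine ⟨?_, by simpa [indicatorOneSubTwo] using hV 1 (one_dvd n) one_pos,
    fun he => by simpa [indicatorOneSubTwo] using hV 2 he.two_dvd two_pos, ?_⟩
  · rw [← Nat.sum_div_divisors, sum_congr rfl fun k hk => hV k (Nat.dvd_of_mem_divisors hk)
      (Nat.pos_of_mem_divisors hk)]
    have hsum := sum_divisors_mul_indicatorOneSubTwo (fun _ => (1 : ℚ)) hn.ne'
    simp only [one_mul] at hsum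
    rw [hsum]
    split_ifs <;> simp_all [← Nat.not_even_iff_odd, even_iff_two_dvd]
  · intro d hd hd0 hdn hn2d
    have hk := hV (n / d) (Nat.div_dvd_of_dvd hd) (Nat.div_pos (Nat.le_of_dvd hn hd) hd0)
    have h1 : n / d ≠ 1 := fun h => hdn (by rw [Nat.eq_mul_of_div_eq_right hd h, mul_one])
    have h2 : n / d ≠ 2 := fun h => hn2d (by rw [Nat.eq_mul_of_div_eq_right hd h, mul_comm])
    rwa [Nat.div_div_self hd hn.ne', indicatorOneSubTwo, if_neg h1, if_neg h2, sub_zero] at hk
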